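/- There is a constant C > 0 such that for all n ≥ 1 and all λ ≥ 0, E[e^{−λ T_n}] ≤ C · exp(−(4/3) · min(λ/n, √λ/2)). -/

import Mathlib

/-!
Truncate the series: with `c i = 2 / (i (i - 1))`, `K ≥ n` and `N ≥ K`, almost surely
`T n ≥ ∑_{K < i ≤ N} c i * S i`, because the terms are a.s. nonnegative and a.s. summable
(`∑ c i < ∞` and the `S i` have a common finite mean), so the `tsum` is not the junk value `0`.
By independence the Laplace transform of the truncated sum is `∏ 1 / (1 + λ c i)`.
For `K ≥ 2√λ` every `λ c i ≤ 1`, where `1 / (1 + x) ≤ exp (-x log 2)`, and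
`∑_{K < i ≤ N} c i` telescopes to `2 / K - 2 / N`. With `N = 30 K` this gives the bound
`exp (-(29/15) log 2 · λ / K)`, and `(29/15) log 2 > 4/3`. Finally `K = max n ⌈2√λ⌉`
satisfies `λ / K ≥ min (λ / n) (√λ / 2) - 1/4`.
-/

open MeasureTheory ProbabilityTheory Filter Topology Set Real

lemma expMeasure_eq_withDensity (r : ℝ) :
    expMeasure r = (volume.restrict (Ioi 0)).withDensity
      fun x => ENNReal.ofReal (r * exp (-(r * x))) := by
  have hpdf : gammaPDF 1 r = (Ici 0).indicator fun x => ENNReal.ofReal (r * exp (-(r * x))) := by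
    ext x
    by_cases hx : 0 ≤ x <;> simp [gammaPDF_eq, hx]
  rw [expMeasure, gammaMeasure, hpdf, withDensity_indicator measurableSet_Ici,
    Measure.restrict_congr_set Ioi_ae_eq_Ici]

lemma expMeasure_Iio_zero (r : ℝ) : expMeasure r (Iio 0) = 0 := by
  rw [expMeasure_eq_withDensity, withDensity_apply _ measurableSet_Iio,
    Measure.restrict_restrict measurableSet_Iio, Iio_inter_Ioi, Ioo_self,
    Measure.restrict_empty, lintegral_zero_measure]

lemma integral_expMeasure {r : ℝ} (hr : 0 ≤ r) (g : ℝ → ℝ) :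
    ∫ x, g x ∂expMeasure r = ∫ x in Ioi 0, r * exp (-(r * x)) * g x := by
  rw [expMeasure_eq_withDensity, integral_withDensity_eq_integral_toReal_smul (by fun_prop)
    (ae_of_all _ fun _ => ENNReal.ofReal_lt_top)]
  congr 1 with x
  rw [ENNReal.toReal_ofReal (by positivity), smul_eq_mul]

lemma integral_exp_neg_mul_expMeasure {r a : ℝ} (hr : 0 ≤ r) (hra : 0 < r + a) :
    ∫ x, exp (-(a * x)) ∂expMeasure r = r / (r + a) := by
  have hexp : ∀ x, r * exp (-(r * x)) * exp (-(a * x)) = r * exp (-(r + a) * x) := fun x => by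
    rw [mul_assoc, ← exp_add]; ring_nf
  simp_rw [integral_expMeasure hr, hexp, integral_const_mul,
    integral_exp_mul_Ioi (neg_lt_zero.2 hra), mul_zero, exp_zero]
  field_simp

lemma lintegral_ofReal_expMeasure_lt_top {r : ℝ} (hr : 0 < r) :
    ∫⁻ x, ENNReal.ofReal x ∂expMeasure r < ⊤ := by
  have hint :
      IntegrableOn (fun x : ℝ => r * (x ^ (1 : ℝ) * exp (-r * x ^ (1 : ℝ)))) (Ioi 0) :=
    (integrableOn_rpow_mul_exp_neg_mul_rpow (by norm_num) one_pos hr).const_mul r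
  rw [expMeasure_eq_withDensity, lintegral_withDensity_eq_lintegral_mul _ (by fun_prop)
    ENNReal.measurable_ofReal]
  refine lt_of_eq_of_lt (setLIntegral_congr_fun measurableSet_Ioi fun x hx => ?_)
    hint.lintegral_lt_top
  rw [Pi.mul_apply, ← ENNReal.ofReal_mul (by positivity), rpow_one]
  ring_nf

section ExponentialLaw

variable {Ω : Type*} [MeasurableSpace Ω] {μ : Measure Ω} {r : ℝ}

lemma aemeasurable_of_map_eq_expMeasure {X : Ω → ℝ} (hr : 0 < r)
    (hX : μ.map X = expMeasure r) : AEMeasurable X μ :=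
  have := isProbabilityMeasure_expMeasure hr
  .of_map_ne_zero (hX ▸ IsProbabilityMeasure.ne_zero _)

lemma ae_nonneg_of_map_eq_expMeasure {X : Ω → ℝ} (hr : 0 < r)
    (hX : μ.map X = expMeasure r) : 0 ≤ᵐ[μ] X := by
  have h := expMeasure_Iio_zero r
  rw [← hX, Measure.map_apply_of_aemeasurable (aemeasurable_of_map_eq_expMeasure hr hX)
    measurableSet_Iio] at h
  filter_upwards [measure_eq_zero_iff_ae_notMem.1 h] with ω hω
  simpa using hω

lemma integral_exp_neg_mul_of_map_eq_expMeasure {X : Ω → ℝ} {a : ℝ} (hr : 0 < r)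
    (hra : 0 < r + a) (hX : μ.map X = expMeasure r) :
    ∫ ω, exp (-(a * X ω)) ∂μ = r / (r + a) := by
  rw [← integral_exp_neg_mul_expMeasure hr.le hra, ← hX,
    integral_map (aemeasurable_of_map_eq_expMeasure hr hX) (by fun_prop)]

lemma lintegral_ofReal_eq_of_map_eq_expMeasure {X : Ω → ℝ} (hr : 0 < r)
    (hX : μ.map X = expMeasure r) :
    ∫⁻ ω, ENNReal.ofReal (X ω) ∂μ = ∫⁻ x, ENNReal.ofReal x ∂expMeasure r := by
  rw [← hX, lintegral_map' (by fun_prop) (aemeasurable_of_map_eq_expMeasure hr hX)]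

lemma ProbabilityTheory.iIndepFun.integral_exp_neg_sum_mul_of_map_eq_expMeasure {ι : Type*}
    {X : ι → Ω → ℝ} (hX : iIndepFun X μ) (hr : 0 < r)
    (hlaw : ∀ i, μ.map (X i) = expMeasure r)
    (s : Finset ι) {a : ι → ℝ} (ha : ∀ i ∈ s, 0 < r + a i) :
    ∫ ω, exp (-∑ i ∈ s, a i * X i ω) ∂μ = ∏ i ∈ s, r / (r + a i) := by
  have hmeas i : AEMeasurable (X i) μ := aemeasurable_of_map_eq_expMeasure hr (hlaw i)
  have hY : iIndepFun (fun i ω => a i * X i ω) μ :=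
    hX.comp₀ (fun i x => a i * x) hmeas fun i => by fun_prop
  have h := hY.mgf_sum₀ (t := -1) (fun i => (hmeas i).const_mul (a i)) s
  simp only [mgf, Finset.sum_apply, neg_one_mul] at h
  rw [h]
  refine Finset.prod_congr rfl fun i hi => ?_
  exact integral_exp_neg_mul_of_map_eq_expMeasure hr (ha i hi) (hlaw i)

end ExponentialLaw

lemma ae_summable_mul_of_lintegral_le {Ω ι : Type*} [MeasurableSpace Ω] [Countable ι]
    {μ : Measure Ω} {X : ι → Ω → ℝ} {c : ι → ℝ} {M : ENNReal}
    (hc : Summable c) (hc0 : ∀ i, 0 ≤ c i) (hX : ∀ i, AEMeasurable (X i) μ)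
    (hX0 : ∀ i, 0 ≤ᵐ[μ] X i) (hXM : ∀ i, ∫⁻ ω, ENNReal.ofReal (X i ω) ∂μ ≤ M)
    (hM : M ≠ ⊤) :
    ∀ᵐ ω ∂μ, Summable fun i => c i * X i ω := by
  have hlin : ∫⁻ ω, ∑' i, ENNReal.ofReal (c i * X i ω) ∂μ < ⊤ := by
    calc ∫⁻ ω, ∑' i, ENNReal.ofReal (c i * X i ω) ∂μ
        = ∑' i, ENNReal.ofReal (c i) * ∫⁻ ω, ENNReal.ofReal (X i ω) ∂μ := by
          rw [lintegral_tsum fun i => ((hX i).const_mul (c i)).ennreal_ofReal]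
          congr 1 with i
          simp_rw [ENNReal.ofReal_mul (hc0 i)]
          exact lintegral_const_mul' _ _ ENNReal.ofReal_ne_top
      _ ≤ ∑' i, ENNReal.ofReal (c i) * M := by gcongr with i; exact hXM i
      _ < ⊤ := by
          rw [ENNReal.tsum_mul_right, ← ENNReal.ofReal_tsum_of_nonneg hc0 hc]
          exact ENNReal.mul_lt_top ENNReal.ofReal_lt_top hM.lt_top
  have hfin := ae_lt_top' (AEMeasurable.tsum fun i =>
    ((hX i).const_mul (c i)).ennreal_ofReal) hlin.ne
  filter_upwards [hfin, ae_all_iff.2 hX0] with ω hω hω0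
  refine (ENNReal.summable_toReal hω.ne).congr fun i => ?_
  exact ENNReal.toReal_ofReal (mul_nonneg (hc0 i) (hω0 i))

lemma one_div_one_add_le_exp_neg_log_two_mul {x : ℝ} (hx0 : 0 ≤ x) (hx1 : x ≤ 1) :
    1 / (1 + x) ≤ exp (-(log 2 * x)) := by
  have hconv : exp (log 2 * x) ≤ 1 + x := by
    have h := convexOn_exp.2 (mem_univ 0) (mem_univ (log 2)) (sub_nonneg.2 hx1) hx0
      (sub_add_cancel 1 x)
    simp only [smul_eq_mul, mul_zero, zero_add, exp_zero, exp_log two_pos, mul_comm x] at h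
    linarith
  rw [exp_neg, one_div]
  exact inv_anti₀ (exp_pos _) hconv

lemma two_div_mul_sub_one_nonneg (i : ℕ) : 0 ≤ 2 / ((i : ℝ) * ((i : ℝ) - 1)) := by
  rcases Nat.eq_zero_or_pos i with rfl | hi
  · simp
  · have : (1 : ℝ) ≤ i := by exact_mod_cast hi
    exact div_nonneg zero_le_two (by nlinarith)

lemma sum_Icc_two_div_mul_sub_one {K N : ℕ} (hK : 1 ≤ K) (hKN : K ≤ N) :
    ∑ i ∈ Finset.Icc (K + 1) N, 2 / ((i : ℝ) * ((i : ℝ) - 1)) = 2 / K - 2 / N := by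
  induction N, hKN using Nat.le_induction with
  | base => simp
  | succ N hKN ih =>
    rw [← Finset.insert_Icc_right_eq_Icc_add_one (by omega), Finset.sum_insert (by simp), ih]
    have hN : (0 : ℝ) < N := by exact_mod_cast hK.trans hKN
    push_cast
    rw [add_sub_cancel_right]
    field_simp
    ring

lemma prod_Icc_one_div_one_add_le_exp {K N : ℕ} {l : ℝ} (hK : 1 ≤ K) (hKN : K ≤ N)
    (hl : 0 ≤ l) (hlK : 2 * l ≤ (K : ℝ) ^ 2) :
    ∏ i ∈ Finset.Icc (K + 1) N, 1 / (1 + l * (2 / ((i : ℝ) * ((i : ℝ) - 1))))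
      ≤ exp (-(log 2 * l * (2 / K - 2 / N))) := by
  have hterm : ∀ i ∈ Finset.Icc (K + 1) N, 0 ≤ l * (2 / ((i : ℝ) * ((i : ℝ) - 1))) ∧
      l * (2 / ((i : ℝ) * ((i : ℝ) - 1))) ≤ 1 := by
    intro i hi
    have hi : (K : ℝ) + 1 ≤ i := by exact_mod_cast (Finset.mem_Icc.1 hi).1
    have hK' : (1 : ℝ) ≤ K := by exact_mod_cast hK
    have hden : (K : ℝ) ^ 2 ≤ i * (i - 1) := by nlinarith
    rw [mul_div_assoc', div_le_one (by nlinarith)]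
    exact ⟨div_nonneg (by linarith) (by nlinarith), by linarith⟩
  calc ∏ i ∈ Finset.Icc (K + 1) N, 1 / (1 + l * (2 / ((i : ℝ) * ((i : ℝ) - 1))))
      ≤ ∏ i ∈ Finset.Icc (K + 1) N,
          exp (-(log 2 * (l * (2 / ((i : ℝ) * ((i : ℝ) - 1)))))) :=
        Finset.prod_le_prod (fun i hi => by have := (hterm i hi).1; positivity)
          fun i hi => one_div_one_add_le_exp_neg_log_two_mul (hterm i hi).1 (hterm i hi).2
    _ = exp (-(log 2 * l * (2 / K - 2 / N))) := by
        rw [← exp_sum, ← sum_Icc_two_div_mul_sub_one hK hKN, Finset.mul_sum,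
          ← Finset.sum_neg_distrib]
        simp only [mul_assoc]

lemma min_div_le_div_max_ceil {n : ℕ} {l : ℝ} (hn : 1 ≤ n) (hl : 0 ≤ l) :
    min (l / n) (√l / 2) ≤ l / (max n ⌈2 * √l⌉₊ : ℕ) + 1 / 4 := by
  rcases le_total n ⌈2 * √l⌉₊ with h | h
  · rw [max_eq_right h]
    have hm : (1 : ℝ) ≤ ⌈2 * √l⌉₊ := by exact_mod_cast hn.trans h
    have hm' : (⌈2 * √l⌉₊ : ℝ) < 2 * √l + 1 := Nat.ceil_lt_add_one (by positivity)
    have hsq := sq_sqrt hl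
    refine (min_le_right _ _).trans ?_
    rw [← sub_le_iff_le_add, le_div_iff₀ (by positivity)]
    rcases le_total (√l / 2 - 1 / 4) 0 with ht | ht
    · nlinarith
    · nlinarith [mul_le_mul_of_nonneg_left hm'.le ht]
  · rw [max_eq_left h]
    linarith [min_le_left (l / n) (√l / 2)]

lemma four_thirds_mul_div_le_log_two_mul {K : ℕ} {l : ℝ} (hl : 0 ≤ l) :
    4 / 3 * (l / K) ≤ log 2 * l * (2 / K - 2 / (30 * K : ℕ)) := by
  have h : log 2 * l * (2 / K - 2 / (30 * K : ℕ)) = 29 / 15 * log 2 * (l / K) := by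
    push_cast; ring
  rw [h]
  exact mul_le_mul_of_nonneg_right (by linarith [log_two_gt_d9]) (by positivity)

lemma sum_Icc_le_tsum_ite {x : ℕ → ℝ} (hx : Summable x) (hx0 : ∀ i, 0 ≤ x i) {n K : ℕ}
    (hnK : n ≤ K) (N : ℕ) :
    ∑ i ∈ Finset.Icc (K + 1) N, x i ≤ ∑' i, if n + 1 ≤ i then x i else 0 := by
  have hite : Summable fun i => if n + 1 ≤ i then x i else 0 :=
    hx.of_nonneg_of_le (fun i => by split_ifs <;> simp [hx0]) fun i => by
      split_ifs <;> simp [hx0]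
  calc ∑ i ∈ Finset.Icc (K + 1) N, x i
      = ∑ i ∈ Finset.Icc (K + 1) N, if n + 1 ≤ i then x i else 0 :=
        Finset.sum_congr rfl fun i hi => (if_pos (by have := (Finset.mem_Icc.1 hi).1; omega)).symm
    _ ≤ ∑' i, if n + 1 ≤ i then x i else 0 :=
        hite.sum_le_tsum _ fun i _ => by split_ifs <;> simp [hx0]

section Kingman

variable {Ω : Type*} [MeasurableSpace Ω] {μ : Measure Ω} {S : ℕ → Ω → ℝ}

lemma ae_nonneg_two_mul_div_mul_sub_one (hexp : ∀ i, 2 ≤ i → μ.map (S i) = expMeasure 1) :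
    ∀ᵐ ω ∂μ, ∀ i : ℕ, 0 ≤ 2 * S i ω / ((i : ℝ) * ((i : ℝ) - 1)) := by
  refine ae_all_iff.2 fun i => ?_
  by_cases hi : 2 ≤ i
  · have hi' : (2 : ℝ) ≤ i := by exact_mod_cast hi
    filter_upwards [ae_nonneg_of_map_eq_expMeasure one_pos (hexp i hi)] with ω hω
    exact div_nonneg (by simpa using hω) (by nlinarith)
  · exact ae_of_all _ fun ω => by interval_cases i <;> simp

lemma summable_two_div_mul_sub_one : Summable fun i : ℕ => 2 / ((i : ℝ) * ((i : ℝ) - 1)) := by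
  refine (Real.summable_one_div_nat_pow.2 one_lt_two).mul_left 4 |>.of_nonneg_of_le
    two_div_mul_sub_one_nonneg fun i => ?_
  rcases le_or_gt 2 i with hi | hi
  · have : (2 : ℝ) ≤ i := by exact_mod_cast hi
    rw [mul_one_div, div_le_div_iff₀ (by nlinarith) (by positivity)]
    nlinarith
  · interval_cases i <;> simp

lemma ae_summable_two_mul_div_mul_sub_one
    (hexp : ∀ i, 2 ≤ i → μ.map (S i) = expMeasure 1) :
    ∀ᵐ ω ∂μ, Summable fun i : ℕ => 2 * S i ω / ((i : ℝ) * ((i : ℝ) - 1)) := by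
  have h := ae_summable_mul_of_lintegral_le (X := fun j : {i : ℕ // 2 ≤ i} => S j)
    (summable_two_div_mul_sub_one.comp_injective Subtype.val_injective)
    (fun j => two_div_mul_sub_one_nonneg j)
    (fun j => aemeasurable_of_map_eq_expMeasure one_pos (hexp j j.2))
    (fun j => ae_nonneg_of_map_eq_expMeasure one_pos (hexp j j.2))
    (fun j => (lintegral_ofReal_eq_of_map_eq_expMeasure one_pos (hexp j j.2)).le)
    (lintegral_ofReal_expMeasure_lt_top one_pos).ne
  filter_upwards [h] with ω hω
  rw [← Subtype.val_injective.summable_iff fun i hi => ?_]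
  · exact hω.congr fun j => by simp only [Function.comp_apply]; ring
  · have : i < 2 := by simpa using hi
    interval_cases i <;> simp

lemma ae_sum_Icc_le_tsum_ite_two_mul_div_mul_sub_one
    (hexp : ∀ i, 2 ≤ i → μ.map (S i) = expMeasure 1) {n K : ℕ} (hnK : n ≤ K) (N : ℕ)
    {l : ℝ} (hl : 0 ≤ l) :
    ∀ᵐ ω ∂μ, ∑ i ∈ Finset.Icc (K + 1) N, l * (2 / ((i : ℝ) * ((i : ℝ) - 1))) * S i ω ≤
      l * ∑' i : ℕ, if n + 1 ≤ i then 2 * S i ω / ((i : ℝ) * ((i : ℝ) - 1)) else 0 := by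
  filter_upwards [ae_nonneg_two_mul_div_mul_sub_one hexp,
    ae_summable_two_mul_div_mul_sub_one hexp] with ω h0 hs
  calc ∑ i ∈ Finset.Icc (K + 1) N, l * (2 / ((i : ℝ) * ((i : ℝ) - 1))) * S i ω
      = l * ∑ i ∈ Finset.Icc (K + 1) N, 2 * S i ω / ((i : ℝ) * ((i : ℝ) - 1)) := by
        rw [Finset.mul_sum]; congr 1 with i; ring
    _ ≤ _ := mul_le_mul_of_nonneg_left (sum_Icc_le_tsum_ite hs h0 hnK N) hl

end Kingman

theorem kingman_Tn_laplace_bound_general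
    {Ω : Type*} [MeasurableSpace Ω] (μ : Measure Ω)
    (S : ℕ → Ω → ℝ)
    (hindep : iIndepFun
      (fun i : {i : ℕ // 2 ≤ i} => S i) μ)
    (hexp : ∀ i : ℕ, 2 ≤ i → μ.map (S i) = expMeasure 1)
    (T : ℕ → Ω → ℝ)
    (hT : ∀ n ω, T n ω
      = ∑' i : ℕ, if n + 1 ≤ i then 2 * S i ω / ((i : ℝ) * ((i : ℝ) - 1)) else 0) :
    ∃ C : ℝ, 0 < C ∧ ∀ n : ℕ, 1 ≤ n → ∀ l : ℝ, 0 ≤ l →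
      ∫ ω, Real.exp (-(l * T n ω)) ∂μ
        ≤ C * Real.exp (-(4 / 3) * min (l / n) (Real.sqrt l / 2)) := by
  refine ⟨exp (1 / 3), exp_pos _, fun n hn l hl => ?_⟩
  set K := max n ⌈2 * √l⌉₊
  have hK : 1 ≤ K := hn.trans (le_max_left _ _)
  have hlK : 2 * l ≤ (K : ℝ) ^ 2 := by
    have h2 : 2 * √l ≤ K := (Nat.le_ceil _).trans (by exact_mod_cast le_max_right _ _)
    nlinarith [sq_sqrt hl, sqrt_nonneg l]
  have hF : ∀ i ∈ Finset.Icc (K + 1) (30 * K), 2 ≤ i := fun i hi => by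
    have := (Finset.mem_Icc.1 hi).1; omega
  set F := (Finset.Icc (K + 1) (30 * K)).subtype (2 ≤ ·)
  set a : ℕ → ℝ := fun i => l * (2 / ((i : ℝ) * ((i : ℝ) - 1)))
  have ha i : 0 < 1 + a i := by have := mul_nonneg hl (two_div_mul_sub_one_nonneg i); linarith
  have hlow : ∀ᵐ ω ∂μ, ∑ j ∈ F, a j * S j ω ≤ l * T n ω := by
    filter_upwards [ae_sum_Icc_le_tsum_ite_two_mul_div_mul_sub_one hexp
      (le_max_left n _) (30 * K) hl] with ω h
    rwa [Finset.sum_subtype_of_mem (fun i => a i * S i ω) hF, hT]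
  have hlap := hindep.integral_exp_neg_sum_mul_of_map_eq_expMeasure one_pos
    (fun j => hexp j j.2) F (a := fun j => a j) fun j _ => ha j
  calc ∫ ω, exp (-(l * T n ω)) ∂μ ≤ ∫ ω, exp (-∑ j ∈ F, a j * S j ω) ∂μ :=
        integral_mono_of_nonneg (ae_of_all _ fun _ => (exp_pos _).le)
          (Integrable.of_integral_ne_zero (hlap ▸ Finset.prod_ne_zero_iff.2 fun j _ =>
            one_div_ne_zero (ha j).ne'))
          (hlow.mono fun ω h => exp_le_exp.2 (neg_le_neg h))
    _ = ∏ i ∈ Finset.Icc (K + 1) (30 * K), 1 / (1 + a i) :=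
        hlap.trans (Finset.prod_subtype_of_mem (fun i => 1 / (1 + a i)) hF)
    _ ≤ exp (-(log 2 * l * (2 / K - 2 / (30 * K : ℕ)))) :=
        prod_Icc_one_div_one_add_le_exp hK (by omega) hl hlK
    _ ≤ exp (1 / 3) * exp (-(4 / 3) * min (l / n) (√l / 2)) := by
        rw [← exp_add, exp_le_exp]
        linarith [min_div_le_div_max_ceil hn hl, four_thirds_mul_div_le_log_two_mul (K := K) hl]

/-- Uniform exponential-moment bound for the Kingman coalescent times:
there is `C > 0` with `E[e^{−λ T n}] ≤ C · exp(−(4/3) · min(λ/n, √λ/2))`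
for all `n ≥ 1` and `λ ≥ 0`. -/
theorem kingman_Tn_laplace_bound
    {Ω : Type*} [MeasurableSpace Ω] (μ : Measure Ω) [IsProbabilityMeasure μ]
    (S : ℕ → Ω → ℝ)
    (hindep : iIndepFun
      (fun i : {i : ℕ // 2 ≤ i} => S i) μ)
    (hexp : ∀ i : ℕ, 2 ≤ i → μ.map (S i) = expMeasure 1)
    (T : ℕ → Ω → ℝ)
    (hT : ∀ n ω, T n ω
      = ∑' i : ℕ, if n + 1 ≤ i then 2 * S i ω / ((i : ℝ) * ((i : ℝ) - 1)) else 0) :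
    ∃ C : ℝ, 0 < C ∧ ∀ n : ℕ, 1 ≤ n → ∀ l : ℝ, 0 ≤ l →
      ∫ ω, Real.exp (-(l * T n ω)) ∂μ
        ≤ C * Real.exp (-(4 / 3) * min (l / n) (Real.sqrt l / 2)) :=
  kingman_Tn_laplace_bound_general μ S hindep hexp T hT
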